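/- Let t > 0, d ≥ 1 and q' ∈ [1, ∞). Then sup_{j ≥ 0} ( ∑_{k ∈ ℕ_0^d, |k|_∞ ∈ {j−1,j,j+1}} 2^{t(j − |k|_1) q'} )^{1/q'} < ∞, where |k|_1 = k_1 + ⋯ + k_d and |k|_∞ = max_i k_i. -/

import Mathlib

/-!
With `x = 2 ^ (t q') > 1` each summand is `x ^ j * ∏ i, x⁻¹ ^ k i`. Since `|k|_∞ ≥ j - 1`, some
coordinate `k i₀` lies in `[j - 1, j + 1]`; a union bound over `i₀` and factorising the sum of
products over the box bound the sum by `d · (∑_{a ≥ j-1} x⁻¹ ^ a) · (∑_a x⁻¹ ^ a) ^ (d - 1)`,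
i.e. by a constant times `x⁻¹ ^ (j - 1)`, which cancels `x ^ j` up to one factor `x`.
-/

open Finset

theorem Finset.sum_filter_exists_mem_prod_le {ι α R : Type*} [Fintype ι] [DecidableEq ι]
    [DecidableEq α] [CommSemiring R] [PartialOrder R] [IsOrderedRing R]
    (A B : Finset α) (g : α → R) (hg : ∀ a, 0 ≤ g a) :
    ∑ k ∈ (Fintype.piFinset fun _ : ι => A).filter (fun k => ∃ i, k i ∈ B), ∏ i, g (k i) ≤
      Fintype.card ι * ((∑ a ∈ B, g a) * (∑ a ∈ A, g a) ^ (Fintype.card ι - 1)) := by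
  set piece : ι → Finset (ι → α) := fun i₀ => Fintype.piFinset (Function.update (fun _ => A) i₀ B)
  have hcover : (Fintype.piFinset fun _ : ι => A).filter (fun k => ∃ i, k i ∈ B) ⊆
      (univ.sigma piece).image Sigma.snd := by
    intro k hk
    obtain ⟨hkA, i₀, hi₀⟩ := mem_filter.mp hk
    rw [Fintype.mem_piFinset] at hkA
    refine mem_image.mpr ⟨⟨i₀, k⟩, mem_sigma.mpr ⟨mem_univ _, ?_⟩, rfl⟩
    refine Fintype.mem_piFinset.mpr fun i => ?_
    rcases eq_or_ne i i₀ with rfl | hi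
    · simpa using hi₀
    · simpa [Function.update_of_ne hi] using hkA i
  have hpiece : ∀ i₀, ∑ k ∈ piece i₀, ∏ i, g (k i) =
      (∑ a ∈ B, g a) * (∑ a ∈ A, g a) ^ (Fintype.card ι - 1) := by
    intro i₀
    rw [← prod_univ_sum, Fintype.prod_eq_mul_prod_compl i₀, Function.update_self]
    have hrest : ∀ i ∈ ({i₀}ᶜ : Finset ι),
        ∑ a ∈ Function.update (fun _ => A) i₀ B i, g a = ∑ a ∈ A, g a := fun i hi => by
      rw [Function.update_of_ne (by simpa using hi)]
    rw [prod_congr rfl hrest, prod_const, card_compl, card_singleton]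
  have hprod_nonneg : ∀ k : ι → α, 0 ≤ ∏ i, g (k i) := fun k => prod_nonneg fun i _ => hg (k i)
  calc _ ≤ ∑ k ∈ (univ.sigma piece).image Sigma.snd, ∏ i, g (k i) :=
        sum_le_sum_of_subset_of_nonneg hcover fun k _ _ => hprod_nonneg k
    _ ≤ ∑ x ∈ univ.sigma piece, ∏ i, g (x.2 i) :=
        sum_image_le_of_nonneg fun k _ => hprod_nonneg k
    _ = ∑ i₀, ∑ k ∈ piece i₀, ∏ i, g (k i) := sum_sigma _ _ _
    _ = _ := by rw [sum_congr rfl fun i₀ _ => hpiece i₀, sum_const, card_univ, nsmul_eq_mul]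

theorem sum_filter_exists_mem_Ico_prod_pow_le {ι K : Type*} [Fintype ι] [DecidableEq ι] [Field K]
    [LinearOrder K] [IsStrictOrderedRing K] {r : K} (hr₀ : 0 ≤ r) (hr₁ : r < 1) (m n : ℕ) :
    ∑ k ∈ (Fintype.piFinset fun _ : ι => range n).filter (fun k => ∃ i, k i ∈ Ico m n),
        ∏ i, r ^ k i ≤
      Fintype.card ι * (r ^ m / (1 - r) * (1 - r)⁻¹ ^ (Fintype.card ι - 1)) := by
  have hrange : ∑ a ∈ range n, r ^ a ≤ (1 - r)⁻¹ := by
    simpa [← range_eq_Ico] using geom_sum_Ico_le_of_lt_one (m := 0) (n := n) hr₀ hr₁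
  grw [sum_filter_exists_mem_prod_le _ _ _ fun a => pow_nonneg hr₀ a,
    geom_sum_Ico_le_of_lt_one hr₀ hr₁, hrange]

theorem pow_mul_inv_pow_sub_one_le {K : Type*} [Field K] [LinearOrder K] [IsStrictOrderedRing K]
    {x : K} (hx : 1 ≤ x) (j : ℕ) : x ^ j * x⁻¹ ^ (j - 1) ≤ x := by
  have hx0 : x ≠ 0 := (zero_lt_one.trans_le hx).ne'
  calc x ^ j * x⁻¹ ^ (j - 1) ≤ x ^ (j - 1 + 1) * x⁻¹ ^ (j - 1) := by
        gcongr
        omega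
    _ = x := by rw [pow_succ, inv_pow, mul_right_comm, mul_inv_cancel₀ (pow_ne_zero _ hx0), one_mul]

theorem Real.rpow_natCast_sub_sum {ι : Type*} [Fintype ι] {b : ℝ} (hb : 0 < b) (j : ℕ)
    (k : ι → ℕ) : b ^ ((j : ℝ) - ∑ i, (k i : ℝ)) = b ^ j * ∏ i, b⁻¹ ^ k i := by
  rw [Real.rpow_sub hb, ← Nat.cast_sum, Real.rpow_natCast, Real.rpow_natCast, prod_pow_eq_pow_sum,
    inv_pow, div_eq_mul_inv]

theorem exists_apply_mem_Ico_of_le_sup {ι : Type*} [Fintype ι] [Nonempty ι] {k : ι → ℕ}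
    {a b : ℕ} (hk : ∀ i, k i < b) (ha : a ≤ univ.sup k) : ∃ i, k i ∈ Ico a b := by
  obtain ⟨i, -, hi⟩ := exists_mem_eq_sup univ univ_nonempty k
  exact ⟨i, mem_Ico.mpr ⟨hi ▸ ha, hk i⟩⟩

theorem stmt_4 (d : ℕ) (hd : 1 ≤ d) (t : ℝ) (ht : 0 < t) (q' : ℝ) (hq' : 1 ≤ q') :
    ∃ C : ℝ, ∀ j : ℕ,
      ((∑ k ∈ (Fintype.piFinset fun _ : Fin d => Finset.range (j + 2)).filter
            (fun k => Finset.univ.sup k = j - 1 ∨ Finset.univ.sup k = j ∨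
              Finset.univ.sup k = j + 1),
          (2 : ℝ) ^ (t * ((j : ℝ) - ∑ i, (k i : ℝ)) * q')) ^ (1 / q')) ≤ C := by
  have : Nonempty (Fin d) := Fin.pos_iff_nonempty.mp hd
  have hq : 0 < q' := zero_lt_one.trans_le hq'
  set x : ℝ := 2 ^ (t * q')
  have hx : 1 < x := Real.one_lt_rpow one_lt_two (mul_pos ht hq)
  have hr : 0 < x⁻¹ := inv_pos.mpr (zero_lt_one.trans hx)
  have hr1 : x⁻¹ < 1 := inv_lt_one_of_one_lt₀ hx
  refine ⟨(d * (x * ((1 - x⁻¹)⁻¹ * (1 - x⁻¹)⁻¹ ^ (d - 1)))) ^ (1 / q'), fun j => ?_⟩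
  refine Real.rpow_le_rpow (sum_nonneg fun k _ => by positivity) ?_ (by positivity)
  calc _ = x ^ j * ∑ k ∈ (Fintype.piFinset fun _ : Fin d => range (j + 2)).filter
            (fun k => univ.sup k = j - 1 ∨ univ.sup k = j ∨ univ.sup k = j + 1),
          ∏ i, x⁻¹ ^ k i := by
        rw [mul_sum]
        refine sum_congr rfl fun k _ => ?_
        rw [mul_right_comm, Real.rpow_mul zero_lt_two.le, Real.rpow_natCast_sub_sum (by positivity)]
    _ ≤ x ^ j * ∑ k ∈ (Fintype.piFinset fun _ : Fin d => range (j + 2)).filter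
            (fun k => ∃ i, k i ∈ Ico (j - 1) (j + 2)), ∏ i, x⁻¹ ^ k i := by
        gcongr with k hk
        refine fun hsup => exists_apply_mem_Ico_of_le_sup (fun i => ?_) (by omega)
        exact mem_range.mp (Fintype.mem_piFinset.mp hk i)
    _ ≤ x ^ j * (d * ((x⁻¹ ^ (j - 1) / (1 - x⁻¹)) * (1 - x⁻¹)⁻¹ ^ (d - 1))) := by
        gcongr x ^ j * ?_
        simpa using sum_filter_exists_mem_Ico_prod_pow_le (ι := Fin d) hr.le hr1 (j - 1) (j + 2)
    _ = d * ((x ^ j * x⁻¹ ^ (j - 1)) * ((1 - x⁻¹)⁻¹ * (1 - x⁻¹)⁻¹ ^ (d - 1))) := by ring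
    _ ≤ _ := by grw [pow_mul_inv_pow_sub_one_le hx.le]; positivity
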